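/- Let X : Ω → ℝ^d be a random vector with finite second moment and let Z₁, Z₂ : Ω → {0,1}^l be random vectors (l > 0) on the same probability space. Let Σ_XX = Cov(X,X) and Σ_XZᵢ = Cov(X, Zᵢ) ∈ ℝ^{d×l} for i ∈ {1,2}. Assume Im(Σ_XZᵢ) ⊆ Im(Σ_XX) for i ∈ {1,2} and that Σ_XZ₁ has full column rank l. Let R be the symmetric positive semidefinite matrix with R² = Σ_XX, let W be the Moore–Penrose pseudoinverse of R, let N₁ be the Moore–Penrose pseudoinverse of W·Σ_XZ₁, and define Â := I_d + R·(W·Σ_XZ₂ − W·Σ_XZ₁)·N₁·W and b̂ := E[X] − Â·E[X]. Then (i) Cov(Â·X + b̂, Z₁) = Cov(X, Z₂), and (ii) for every A ∈ ℝ^{d×d} and b ∈ ℝ^d satisfying Cov(A·X + b, Z₁) = Cov(X, Z₂), one has E[‖Â·X + b̂ − X‖²] ≤ E[‖A·X + b − X‖²]. (MidSteer: Â, b̂ solve the minimal-disturbance affine concept-manipulation problem.) -/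

import Mathlib

open MeasureTheory Matrix

/-- The cross-covariance matrix of two random vectors. -/
noncomputable def crossCov {Ω : Type*} [MeasureSpace Ω] {m k : ℕ}
    (X : Ω → Fin m → ℝ) (Z : Ω → Fin k → ℝ) : Matrix (Fin m) (Fin k) ℝ :=
  Matrix.of fun i j => (∫ ω, X ω i * Z ω j) - (∫ ω, X ω i) * (∫ ω, Z ω j)

/-- The componentwise mean of a random vector. -/
noncomputable def vmean {Ω : Type*} [MeasureSpace Ω] {m : ℕ}
    (X : Ω → Fin m → ℝ) : Fin m → ℝ :=
  fun i => ∫ ω, X ω i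

set_option linter.unusedSectionVars false

section Helpers
variable {Ω : Type*} [MeasureSpace Ω] [IsProbabilityMeasure (volume : Measure Ω)]
variable {d l : ℕ} {X : Ω → Fin d → ℝ} {Z : Ω → Fin l → ℝ}

lemma measX (hXm : Measurable X) (i : Fin d) : Measurable fun ω => X ω i :=
  (measurable_pi_apply i).comp hXm

lemma int_sq (hXm : Measurable X) (hX2 : Integrable (fun ω => ∑ i, (X ω i) ^ 2))
    (i : Fin d) : Integrable fun ω => X ω i ^ 2 := by
  refine hX2.mono ((measX hXm i).pow_const 2).aestronglyMeasurable (ae_of_all _ fun ω => ?_)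
  have h1 : (0:ℝ) ≤ X ω i ^ 2 := sq_nonneg _
  have h2 : X ω i ^ 2 ≤ ∑ j, X ω j ^ 2 :=
    Finset.single_le_sum (fun j _ => sq_nonneg (X ω j)) (Finset.mem_univ i)
  have h3 : (0:ℝ) ≤ ∑ j, X ω j ^ 2 := Finset.sum_nonneg fun j _ => sq_nonneg _
  simp only [Real.norm_eq_abs, abs_of_nonneg h1, abs_of_nonneg h3]
  exact h2

lemma int_X (hXm : Measurable X) (hX2 : Integrable (fun ω => ∑ i, (X ω i) ^ 2))
    (i : Fin d) : Integrable fun ω => X ω i := by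
  refine ((int_sq hXm hX2 i).add (integrable_const 1)).mono
    (measX hXm i).aestronglyMeasurable (ae_of_all _ fun ω => ?_)
  have : |X ω i| ≤ X ω i ^ 2 + 1 := by nlinarith [sq_nonneg (|X ω i| - 1), sq_abs (X ω i)]
  simpa [Real.norm_eq_abs, abs_of_nonneg (by positivity : (0:ℝ) ≤ X ω i ^ 2 + 1)] using this

lemma int_XX (hXm : Measurable X) (hX2 : Integrable (fun ω => ∑ i, (X ω i) ^ 2))
    (i j : Fin d) : Integrable fun ω => X ω i * X ω j := by
  refine ((int_sq hXm hX2 i).add (int_sq hXm hX2 j)).mono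
    ((measX hXm i).mul (measX hXm j)).aestronglyMeasurable (ae_of_all _ fun ω => ?_)
  have : |X ω i| * |X ω j| ≤ X ω i ^ 2 + X ω j ^ 2 := by
    nlinarith [sq_nonneg (|X ω i| - |X ω j|), sq_abs (X ω i), sq_abs (X ω j),
      abs_nonneg (X ω i), abs_nonneg (X ω j)]
  simpa [Real.norm_eq_abs,
    abs_of_nonneg (by positivity : (0:ℝ) ≤ X ω i ^ 2 + X ω j ^ 2)] using this

lemma int_Z (hZm : Measurable Z) (hZ01 : ∀ ω j, Z ω j = 0 ∨ Z ω j = 1) (j : Fin l) :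
    Integrable fun ω => Z ω j := by
  refine (integrable_const (1:ℝ)).mono (measX hZm j).aestronglyMeasurable
    (ae_of_all _ fun ω => ?_)
  rcases hZ01 ω j with h | h <;> simp [h]

lemma int_XZ (hXm : Measurable X) (hX2 : Integrable (fun ω => ∑ i, (X ω i) ^ 2))
    (hZm : Measurable Z) (hZ01 : ∀ ω j, Z ω j = 0 ∨ Z ω j = 1) (i : Fin d) (j : Fin l) :
    Integrable fun ω => X ω i * Z ω j := by
  refine ((int_sq hXm hX2 i).add (integrable_const 1)).mono
    ((measX hXm i).mul (measX hZm j)).aestronglyMeasurable (ae_of_all _ fun ω => ?_)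
  have h1 : |X ω i| * |Z ω j| ≤ |X ω i| := by
    rcases hZ01 ω j with h | h <;> simp [h, abs_nonneg]
  have h2 : |X ω i| ≤ X ω i ^ 2 + 1 := by nlinarith [sq_nonneg (|X ω i| - 1), sq_abs (X ω i)]
  simpa [Real.norm_eq_abs,
    abs_of_nonneg (by positivity : (0:ℝ) ≤ X ω i ^ 2 + 1)] using h1.trans h2


lemma crossCov_affine (hXm : Measurable X) (hZm : Measurable Z)
    (hX2 : Integrable (fun ω => ∑ i, (X ω i) ^ 2))
    (hZ01 : ∀ ω j, Z ω j = 0 ∨ Z ω j = 1)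
    (A : Matrix (Fin d) (Fin d) ℝ) (b : Fin d → ℝ) :
    crossCov (fun ω => A.mulVec (X ω) + b) Z = A * crossCov X Z := by
  ext i j
  have h1 : (∫ ω, (A.mulVec (X ω) i + b i) * Z ω j)
      = (∑ k, A i k * ∫ ω, X ω k * Z ω j) + b i * ∫ ω, Z ω j := by
    have hfun : (fun ω => (A.mulVec (X ω) i + b i) * Z ω j)
        = fun ω => (∑ k, A i k * (X ω k * Z ω j)) + b i * Z ω j := by
      funext ω
      simp only [Matrix.mulVec, dotProduct, add_mul, Finset.sum_mul, mul_assoc]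
    rw [hfun, integral_add (integrable_finset_sum _ fun k _ =>
        (int_XZ hXm hX2 hZm hZ01 k j).const_mul _) ((int_Z hZm hZ01 j).const_mul _),
      integral_finset_sum _ fun k _ => (int_XZ hXm hX2 hZm hZ01 k j).const_mul _]
    simp [integral_const_mul]
  have h2 : (∫ ω, A.mulVec (X ω) i + b i) = (∑ k, A i k * ∫ ω, X ω k) + b i := by
    have hfun : (fun ω => A.mulVec (X ω) i + b i)
        = fun ω => (∑ k, A i k * X ω k) + b i := by
      funext ω; simp [Matrix.mulVec, dotProduct]
    rw [hfun, integral_add (integrable_finset_sum _ fun k _ =>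
        (int_X hXm hX2 k).const_mul _) (integrable_const _),
      integral_finset_sum _ fun k _ => (int_X hXm hX2 k).const_mul _]
    simp [integral_const_mul]
  have hprob : (∫ (_ : Ω), b i) = b i := by simp
  show (∫ ω, (A.mulVec (X ω) i + b i) * Z ω j)
      - (∫ ω, A.mulVec (X ω) i + b i) * (∫ ω, Z ω j) = _
  rw [h1, h2]
  simp only [Matrix.mul_apply, crossCov, Matrix.of_apply]
  simp only [mul_sub, Finset.sum_sub_distrib, add_mul, Finset.sum_mul, mul_assoc]
  ring

end Helpers
section Obj
variable {Ω : Type*} [MeasureSpace Ω] [IsProbabilityMeasure (volume : Measure Ω)]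
variable {d : ℕ} {X : Ω → Fin d → ℝ}

lemma integral_quad (hXm : Measurable X) (hX2 : Integrable (fun ω => ∑ i, (X ω i) ^ 2))
    (M : Matrix (Fin d) (Fin d) ℝ) (c : Fin d → ℝ) :
    (∫ ω, ∑ i, (M.mulVec (X ω) i + c i) ^ 2)
      = (∑ i, ∑ k, ∑ k', M i k * M i k' * ∫ ω, X ω k * X ω k')
        + ((∑ i, 2 * c i * ∑ k, M i k * ∫ ω, X ω k) + ∑ i, c i ^ 2) := by
  have key : (fun ω => ∑ i, (M.mulVec (X ω) i + c i) ^ 2)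
      = fun ω => (∑ i, ∑ k, ∑ k', M i k * M i k' * (X ω k * X ω k'))
        + ((∑ i, 2 * c i * ∑ k, M i k * X ω k) + ∑ i, c i ^ 2) := by
    funext ω
    rw [← Finset.sum_add_distrib, ← Finset.sum_add_distrib]
    refine Finset.sum_congr rfl fun i _ => ?_
    simp only [Matrix.mulVec, dotProduct]
    rw [add_sq, pow_two, Finset.sum_mul_sum]
    have h : ∀ k k', M i k * X ω k * (M i k' * X ω k')
        = M i k * M i k' * (X ω k * X ω k') := fun _ _ => by ring
    simp only [h]
    ring
  rw [key]
  have i1 : Integrable (fun ω => ∑ i, ∑ k, ∑ k', M i k * M i k' * (X ω k * X ω k')) :=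
    integrable_finset_sum _ fun i _ => integrable_finset_sum _ fun k _ =>
      integrable_finset_sum _ fun k' _ => (int_XX hXm hX2 k k').const_mul _
  have i2 : Integrable (fun ω => ∑ i, 2 * c i * ∑ k, M i k * X ω k) := by
    have : (fun ω => ∑ i, 2 * c i * ∑ k, M i k * X ω k)
        = fun ω => ∑ i, ∑ k, 2 * c i * (M i k * X ω k) := by
      funext ω; exact Finset.sum_congr rfl fun i _ => Finset.mul_sum _ _ _
    rw [this]
    exact integrable_finset_sum _ fun i _ => integrable_finset_sum _ fun k _ =>
      ((int_X hXm hX2 k).const_mul _).const_mul _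
  have i3 : Integrable (fun ω => (∑ i, 2 * c i * ∑ k, M i k * X ω k) + ∑ i, c i ^ 2) := by
    exact i2.add (integrable_const _)
  have e1 : (∫ ω, (∑ i, ∑ k, ∑ k', M i k * M i k' * (X ω k * X ω k'))
        + ((∑ i, 2 * c i * ∑ k, M i k * X ω k) + ∑ i, c i ^ 2))
      = (∫ ω, ∑ i, ∑ k, ∑ k', M i k * M i k' * (X ω k * X ω k'))
        + ∫ ω, ((∑ i, 2 * c i * ∑ k, M i k * X ω k) + ∑ i, c i ^ 2) :=
    integral_add i1 i3
  have e2 : (∫ ω, ((∑ i, 2 * c i * ∑ k, M i k * X ω k) + ∑ i, c i ^ 2))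
      = (∫ ω, ∑ i, 2 * c i * ∑ k, M i k * X ω k) + ∫ ω, (∑ i, c i ^ 2 : ℝ) :=
    integral_add i2 (integrable_const _)
  rw [e1, e2,
    integral_finset_sum _ fun i _ => integrable_finset_sum _ fun k _ =>
      integrable_finset_sum _ fun k' _ => (int_XX hXm hX2 k k').const_mul _]
  congr 1
  · refine Finset.sum_congr rfl fun i _ => ?_
    rw [integral_finset_sum _ fun k _ => integrable_finset_sum _ fun k' _ =>
      (int_XX hXm hX2 k k').const_mul _]
    refine Finset.sum_congr rfl fun k _ => ?_
    rw [integral_finset_sum _ fun k' _ => (int_XX hXm hX2 k k').const_mul _]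
    exact Finset.sum_congr rfl fun k' _ => integral_const_mul _ _
  congr 1
  · have : (fun ω => ∑ i, 2 * c i * ∑ k, M i k * X ω k)
        = fun ω => ∑ i, ∑ k, 2 * c i * (M i k * X ω k) := by
      funext ω; exact Finset.sum_congr rfl fun i _ => Finset.mul_sum _ _ _
    rw [this, integral_finset_sum _ (f := fun i ω => ∑ k, 2 * c i * (M i k * X ω k))
      fun i _ => integrable_finset_sum _ fun k _ =>
      ((int_X hXm hX2 k).const_mul _).const_mul _]
    refine Finset.sum_congr rfl fun i _ => ?_
    rw [Finset.mul_sum, integral_finset_sum _ (f := fun k ω => 2 * c i * (M i k * X ω k))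
      fun k _ => ((int_X hXm hX2 k).const_mul _).const_mul _]
    refine Finset.sum_congr rfl fun k _ => ?_
    simp [integral_const_mul]
  · simp

end Obj
section Obj2
variable {Ω : Type*} [MeasureSpace Ω] [IsProbabilityMeasure (volume : Measure Ω)]
variable {d : ℕ} {X : Ω → Fin d → ℝ}

lemma objective_eq (hXm : Measurable X) (hX2 : Integrable (fun ω => ∑ i, (X ω i) ^ 2))
    (A : Matrix (Fin d) (Fin d) ℝ) (b : Fin d → ℝ) :
    (∫ ω, ∑ i, (A.mulVec (X ω) i + b i - X ω i) ^ 2)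
      = Matrix.trace ((A - 1) * crossCov X X * (A - 1)ᵀ)
        + ∑ i, ((A - 1).mulVec (vmean X) + b) i ^ 2 := by
  have hfun : (fun ω => ∑ i, (A.mulVec (X ω) i + b i - X ω i) ^ 2)
      = fun ω => ∑ i, ((A - 1).mulVec (X ω) i + b i) ^ 2 := by
    funext ω
    refine Finset.sum_congr rfl fun i _ => ?_
    rw [Matrix.sub_mulVec, Matrix.one_mulVec]
    simp only [Pi.sub_apply]
    ring
  rw [hfun, integral_quad hXm hX2 (A - 1) b]
  simp only [Matrix.trace, Matrix.diag, Matrix.mul_apply, Matrix.transpose_apply,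
    crossCov, Matrix.of_apply, Matrix.mulVec, dotProduct, vmean, Pi.add_apply]
  rw [← Finset.sum_add_distrib, ← Finset.sum_add_distrib, ← Finset.sum_add_distrib]
  refine Finset.sum_congr rfl fun i _ => ?_
  simp only [add_sq, pow_two]
  rw [add_mul, mul_add, mul_add, Finset.sum_mul_sum]
  simp only [mul_sub, sub_mul, Finset.sum_sub_distrib, Finset.sum_mul, Finset.mul_sum]
  conv_rhs => rw [Finset.sum_comm]
  ring_nf
  simp only [mul_assoc, mul_comm, mul_left_comm]
  ring_nf
  rw [Finset.sum_mul]

end Obj2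
section MatOpt
variable {d l : ℕ}

lemma trace_mul_transpose_nonneg (G : Matrix (Fin d) (Fin d) ℝ) :
    0 ≤ Matrix.trace (G * Gᵀ) := by
  simp only [Matrix.trace, Matrix.diag, Matrix.mul_apply, Matrix.transpose_apply]
  exact Finset.sum_nonneg fun i _ => Finset.sum_nonneg fun j _ => mul_self_nonneg _

lemma mat_min (R W : Matrix (Fin d) (Fin d) ℝ) (S1 S2 : Matrix (Fin d) (Fin l) ℝ)
    (N₁ : Matrix (Fin l) (Fin d) ℝ)
    (hRT : Rᵀ = R) (hWsym : Wᵀ = W)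
    (hW2 : W * R * W = W) (hW4 : (W * R)ᵀ = W * R)
    (hN2 : N₁ * (W * S1) * N₁ = N₁)
    (hN3 : ((W * S1) * N₁)ᵀ = (W * S1) * N₁)
    (hP1 : R * W * S1 = S1) (hP2 : R * W * S2 = S2)
    (hfull : N₁ * (W * S1) = 1)
    (M : Matrix (Fin d) (Fin d) ℝ) (hM : M * S1 = S2 - S1) :
    Matrix.trace (((R * (W * S2 - W * S1) * N₁ * W) * R)
        * ((R * (W * S2 - W * S1) * N₁ * W) * R)ᵀ)
      ≤ Matrix.trace ((M * R) * (M * R)ᵀ) := by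
  set Mhat : Matrix (Fin d) (Fin d) ℝ := R * (W * S2 - W * S1) * N₁ * W with hMhat
  have hRW : R * W = W * R := by
    calc R * W = Rᵀ * Wᵀ := by rw [hRT, hWsym]
    _ = (W * R)ᵀ := (Matrix.transpose_mul W R).symm
    _ = W * R := hW4
  have hWWR : W * (W * R) = W := by
    rw [← hRW]
    calc W * (R * W) = W * R * W := by rw [Matrix.mul_assoc]
    _ = W := hW2
  have hP1' : R * (W * S1) = S1 := by rw [← Matrix.mul_assoc]; exact hP1
  have hMhatS1 : Mhat * S1 = S2 - S1 := by
    calc Mhat * S1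
        = R * (W * S2 - W * S1) * (N₁ * (W * S1)) := by
          rw [hMhat, Matrix.mul_assoc (R * (W * S2 - W * S1) * N₁) W S1,
            Matrix.mul_assoc (R * (W * S2 - W * S1)) N₁ (W * S1)]
    _ = R * (W * S2 - W * S1) := by rw [hfull, Matrix.mul_one]
    _ = R * W * S2 - R * W * S1 := by
          rw [Matrix.mul_sub, Matrix.mul_assoc, Matrix.mul_assoc]
    _ = S2 - S1 := by rw [hP1, hP2]
  set E : Matrix (Fin d) (Fin d) ℝ := Mhat * R with hE
  set G : Matrix (Fin d) (Fin d) ℝ := M * R - E with hG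
  have hGW : G * (W * S1) = 0 := by
    have h1 : M * R * (W * S1) = S2 - S1 := by
      rw [Matrix.mul_assoc M R (W * S1), hP1', hM]
    have h2 : E * (W * S1) = S2 - S1 := by
      rw [hE, Matrix.mul_assoc Mhat R (W * S1), hP1', hMhatS1]
    rw [hG, Matrix.sub_mul, h1, h2, sub_self]
  have hN₁' : N₁ = N₁ * (N₁ᵀ * (W * S1)ᵀ) := by
    calc N₁ = N₁ * (W * S1) * N₁ := hN2.symm
    _ = N₁ * ((W * S1) * N₁) := by rw [Matrix.mul_assoc]
    _ = N₁ * ((W * S1) * N₁)ᵀ := by rw [hN3]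
    _ = N₁ * (N₁ᵀ * (W * S1)ᵀ) := by rw [Matrix.transpose_mul]
  have hkey : (W * S1)ᵀ * (W * (R * Gᵀ)) = 0 := by
    calc (W * S1)ᵀ * (W * (R * Gᵀ))
        = S1ᵀ * Wᵀ * (W * (R * Gᵀ)) := by rw [Matrix.transpose_mul]
    _ = S1ᵀ * (W * (W * (R * Gᵀ))) := by rw [hWsym, Matrix.mul_assoc]
    _ = S1ᵀ * (W * (W * R) * Gᵀ) := by
          rw [← Matrix.mul_assoc W R Gᵀ, ← Matrix.mul_assoc W (W * R) Gᵀ]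
    _ = (G * (W * S1))ᵀ := by
          rw [hWWR, Matrix.transpose_mul G (W * S1), Matrix.transpose_mul W S1, hWsym,
            Matrix.mul_assoc]
    _ = 0 := by rw [hGW, Matrix.transpose_zero]
  have hNz : N₁ * (W * (R * Gᵀ)) = 0 := by
    conv_lhs => rw [hN₁']
    rw [Matrix.mul_assoc N₁ (N₁ᵀ * (W * S1)ᵀ) (W * (R * Gᵀ)),
      Matrix.mul_assoc N₁ᵀ ((W * S1)ᵀ) (W * (R * Gᵀ)), hkey, Matrix.mul_zero,
      Matrix.mul_zero]
  have horth : E * Gᵀ = 0 := by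
    calc E * Gᵀ = R * (W * S2 - W * S1) * N₁ * (W * (R * Gᵀ)) := by
          rw [hE, hMhat, Matrix.mul_assoc (R * (W * S2 - W * S1) * N₁) W R,
            Matrix.mul_assoc (R * (W * S2 - W * S1) * N₁) (W * R) Gᵀ,
            Matrix.mul_assoc W R Gᵀ]
    _ = 0 := by rw [Matrix.mul_assoc (R * (W * S2 - W * S1)) N₁ (W * (R * Gᵀ)), hNz,
          Matrix.mul_zero]
  have hGE : G * Eᵀ = 0 := by
    calc G * Eᵀ = (E * Gᵀ)ᵀ := by rw [Matrix.transpose_mul E Gᵀ, Matrix.transpose_transpose]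
    _ = 0 := by rw [horth, Matrix.transpose_zero]
  have hsplit : M * R = E + G := by rw [hG]; abel
  have expand : (M * R) * (M * R)ᵀ = E * Eᵀ + G * Gᵀ := by
    rw [hsplit, Matrix.transpose_add, Matrix.add_mul, Matrix.mul_add, Matrix.mul_add,
      horth, hGE, add_zero, zero_add]
  calc Matrix.trace (E * Eᵀ) ≤ Matrix.trace (E * Eᵀ) + Matrix.trace (G * Gᵀ) :=
        le_add_of_nonneg_right (trace_mul_transpose_nonneg G)
  _ = Matrix.trace ((M * R) * (M * R)ᵀ) := by rw [expand, Matrix.trace_add]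

end MatOpt
section Glue
variable {d l : ℕ}

lemma trace_form (M R : Matrix (Fin d) (Fin d) ℝ) (hRT : Rᵀ = R) :
    Matrix.trace (M * (R * R) * Mᵀ) = Matrix.trace ((M * R) * (M * R)ᵀ) := by
  rw [Matrix.transpose_mul, hRT, ← Matrix.mul_assoc M R R, Matrix.mul_assoc (M * R) R Mᵀ]

lemma proj_col (R W S0 : Matrix (Fin d) (Fin d) ℝ) (S : Matrix (Fin d) (Fin l) ℝ)
    (hW1 : R * W * R = R) (hRS : R * R = S0)
    (hIm : ∀ j, ∃ x, S0.mulVec x = fun i => S i j) : R * W * S = S := by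
  ext i j
  obtain ⟨x, hx⟩ := hIm j
  have hcol : (fun k => S k j) = (R * R).mulVec x := by rw [hRS, hx]
  have hfun : (R * W).mulVec (fun k => S k j) = fun k => S k j := by
    rw [hcol, Matrix.mulVec_mulVec, ← Matrix.mul_assoc (R * W) R R, hW1]
  have h1 : (R * W * S) i j = ((R * W).mulVec fun k => S k j) i := by
    simp [Matrix.mul_apply, Matrix.mulVec, dotProduct, Matrix.mul_assoc]
  rw [h1, hfun]

lemma mul_left_cancel_of_inj (A : Matrix (Fin d) (Fin l) ℝ) (P Q : Matrix (Fin l) (Fin l) ℝ)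
    (hinj : Function.Injective A.mulVec) (h : A * P = A * Q) : P = Q := by
  ext i j
  have hv : A.mulVec (P.mulVec (Pi.single j 1)) = A.mulVec (Q.mulVec (Pi.single j 1)) := by
    rw [Matrix.mulVec_mulVec, Matrix.mulVec_mulVec, h]
  have h2 := congrFun (hinj hv) i
  simpa [Matrix.mulVec_single] using h2

lemma mhat_mul (R W : Matrix (Fin d) (Fin d) ℝ) (S1 S2 : Matrix (Fin d) (Fin l) ℝ)
    (N₁ : Matrix (Fin l) (Fin d) ℝ)
    (hP1 : R * W * S1 = S1) (hP2 : R * W * S2 = S2)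
    (hfull : N₁ * (W * S1) = 1) :
    (R * (W * S2 - W * S1) * N₁ * W) * S1 = S2 - S1 := by
  calc (R * (W * S2 - W * S1) * N₁ * W) * S1
      = R * (W * S2 - W * S1) * (N₁ * (W * S1)) := by
        rw [Matrix.mul_assoc (R * (W * S2 - W * S1) * N₁) W S1,
          Matrix.mul_assoc (R * (W * S2 - W * S1)) N₁ (W * S1)]
  _ = R * (W * S2 - W * S1) := by rw [hfull, Matrix.mul_one]
  _ = R * W * S2 - R * W * S1 := by
        rw [Matrix.mul_sub, Matrix.mul_assoc, Matrix.mul_assoc]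
  _ = S2 - S1 := by rw [hP1, hP2]

end Glue

/-- Uniqueness of the Moore-Penrose pseudoinverse. -/
lemma pinv_unique {m n : Type*} [Fintype m] [Fintype n]
    (M : Matrix m n ℝ) (N N' : Matrix n m ℝ)
    (h1 : M * N * M = M) (h2 : N * M * N = N) (h3 : (M * N)ᵀ = M * N) (h4 : (N * M)ᵀ = N * M)
    (h1' : M * N' * M = M) (h2' : N' * M * N' = N') (h3' : (M * N')ᵀ = M * N')
    (h4' : (N' * M)ᵀ = N' * M) : N = N' := by
  have hMN : M * N = M * N' := by
    calc M * N = ((M * N') * (M * N))ᵀᵀ := by rw [Matrix.mul_assoc M N' (M*N), ← Matrix.mul_assoc N' M N, ← Matrix.mul_assoc M (N'*M) N, ← Matrix.mul_assoc M N' M, h1', transpose_transpose]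
    _ = ((M*N)ᵀ * (M*N')ᵀ)ᵀ := by rw [← transpose_mul]
    _ = (M*N*(M*N'))ᵀ := by rw [h3, h3']
    _ = (M*N')ᵀ := by rw [Matrix.mul_assoc, ← Matrix.mul_assoc N M N', ← Matrix.mul_assoc M (N*M) N', ← Matrix.mul_assoc M N M, h1]
    _ = M * N' := h3'
  have hNM : N * M = N' * M := by
    calc N * M = ((N*M)*(N'*M))ᵀᵀ := by rw [Matrix.mul_assoc N M (N'*M), ← Matrix.mul_assoc M N' M, h1', transpose_transpose]
    _ = ((N'*M)ᵀ * (N*M)ᵀ)ᵀ := by rw [← transpose_mul]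
    _ = ((N'*M)*(N*M))ᵀ := by rw [h4, h4']
    _ = (N'*M)ᵀ := by rw [Matrix.mul_assoc N' M (N*M), ← Matrix.mul_assoc M N M, h1]
    _ = N' * M := h4'
  calc N = N * M * N := h2.symm
  _ = N' * M * N' := by rw [hNM, Matrix.mul_assoc, hMN, ← Matrix.mul_assoc]
  _ = N' := h2'

lemma mulVec_injective_of_rank {d l : ℕ} (M : Matrix (Fin d) (Fin l) ℝ)
    (h : M.rank = l) : Function.Injective M.mulVec := by
  have hrn := LinearMap.finrank_range_add_finrank_ker M.mulVecLin
  rw [show Module.finrank ℝ (LinearMap.range M.mulVecLin) = M.rank from rfl, h,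
    Module.finrank_pi] at hrn
  simp only [Fintype.card_fin] at hrn
  have h0 : Module.finrank ℝ (LinearMap.ker M.mulVecLin) = 0 := by omega
  have hker : LinearMap.ker M.mulVecLin = ⊥ := by
    rw [← Submodule.finrank_eq_zero (R := ℝ)]; exact h0
  have := LinearMap.ker_eq_bot.mp hker
  exact this

/-- MidSteer: Let `Z₁, Z₂ : Ω → {0,1}^l` (`l > 0`), with
`Σ_XX = Cov(X,X)`, `Σ_XZᵢ = Cov(X,Zᵢ)`, `Im(Σ_XZᵢ) ⊆ Im(Σ_XX)`, `Σ_XZ₁` of full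
column rank `l`, `R` the symmetric PSD square root of `Σ_XX`, `W = R⁺`,
`N₁ = (W·Σ_XZ₁)⁺`. Then `Â = I + R·(W·Σ_XZ₂ − W·Σ_XZ₁)·N₁·W` and
`b̂ = E[X] − Â·E[X]` satisfy `Cov(Â·X + b̂, Z₁) = Cov(X, Z₂)` and minimize
`E[‖A·X + b − X‖²]` among all affine maps with `Cov(A·X + b, Z₁) = Cov(X, Z₂)`. -/
theorem MidSteer_optimality
    {Ω : Type*} [MeasureSpace Ω] [IsProbabilityMeasure (volume : Measure Ω)]
    {d l : ℕ} (hl : 0 < l)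
    (X : Ω → Fin d → ℝ) (Z₁ Z₂ : Ω → Fin l → ℝ)
    (hXm : Measurable X) (hZ₁m : Measurable Z₁) (hZ₂m : Measurable Z₂)
    (hX2 : Integrable (fun ω => ∑ i, (X ω i) ^ 2))
    (hZ₁01 : ∀ ω j, Z₁ ω j = 0 ∨ Z₁ ω j = 1)
    (hZ₂01 : ∀ ω j, Z₂ ω j = 0 ∨ Z₂ ω j = 1)
    (hIm1 : ∀ j, ∃ x : Fin d → ℝ,
      (crossCov X X).mulVec x = fun i => crossCov X Z₁ i j)
    (hIm2 : ∀ j, ∃ x : Fin d → ℝ,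
      (crossCov X X).mulVec x = fun i => crossCov X Z₂ i j)
    (hrank : (crossCov X Z₁).rank = l)
    (R W : Matrix (Fin d) (Fin d) ℝ) (N₁ : Matrix (Fin l) (Fin d) ℝ)
    (hR : R.PosSemidef) (hRS : R * R = crossCov X X)
    (hW1 : R * W * R = R) (hW2 : W * R * W = W)
    (hW3 : (R * W)ᵀ = R * W) (hW4 : (W * R)ᵀ = W * R)
    (hN1 : (W * crossCov X Z₁) * N₁ * (W * crossCov X Z₁) = W * crossCov X Z₁)
    (hN2 : N₁ * (W * crossCov X Z₁) * N₁ = N₁)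
    (hN3 : ((W * crossCov X Z₁) * N₁)ᵀ = (W * crossCov X Z₁) * N₁)
    (hN4 : (N₁ * (W * crossCov X Z₁))ᵀ = N₁ * (W * crossCov X Z₁))
    (Ahat : Matrix (Fin d) (Fin d) ℝ) (bhat : Fin d → ℝ)
    (hAhat : Ahat = 1 + R * (W * crossCov X Z₂ - W * crossCov X Z₁) * N₁ * W)
    (hbhat : bhat = vmean X - Ahat.mulVec (vmean X)) :
    crossCov (fun ω => Ahat.mulVec (X ω) + bhat) Z₁ = crossCov X Z₂
    ∧
    ∀ (A : Matrix (Fin d) (Fin d) ℝ) (b : Fin d → ℝ),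
      crossCov (fun ω => A.mulVec (X ω) + b) Z₁ = crossCov X Z₂ →
      (∫ ω, ∑ i, (Ahat.mulVec (X ω) i + bhat i - X ω i) ^ 2)
        ≤ ∫ ω, ∑ i, (A.mulVec (X ω) i + b i - X ω i) ^ 2 := by
  have hRT : Rᵀ = R := by
    rw [← Matrix.conjTranspose_eq_transpose_of_trivial]; exact hR.1
  have e1 : R * Wᵀ * R = R := by
    have h := congrArg Matrix.transpose hW1
    rw [Matrix.transpose_mul, Matrix.transpose_mul, hRT, ← Matrix.mul_assoc] at h
    exact h
  have e2 : Wᵀ * R * Wᵀ = Wᵀ := by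
    have h := congrArg Matrix.transpose hW2
    rw [Matrix.transpose_mul, Matrix.transpose_mul, hRT, ← Matrix.mul_assoc] at h
    exact h
  have e3 : (R * Wᵀ)ᵀ = R * Wᵀ := by
    calc (R * Wᵀ)ᵀ = W * R := by
          rw [Matrix.transpose_mul, Matrix.transpose_transpose, hRT]
    _ = (W * R)ᵀ := hW4.symm
    _ = R * Wᵀ := by rw [Matrix.transpose_mul, hRT]
  have e4 : (Wᵀ * R)ᵀ = Wᵀ * R := by
    calc (Wᵀ * R)ᵀ = R * W := by
          rw [Matrix.transpose_mul, Matrix.transpose_transpose, hRT]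
    _ = (R * W)ᵀ := hW3.symm
    _ = Wᵀ * R := by rw [Matrix.transpose_mul, hRT]
  have hWsym : Wᵀ = W := (pinv_unique R W Wᵀ hW1 hW2 hW3 hW4 e1 e2 e3 e4).symm
  have hP1 : R * W * crossCov X Z₁ = crossCov X Z₁ :=
    proj_col R W _ _ hW1 hRS hIm1
  have hP2 : R * W * crossCov X Z₂ = crossCov X Z₂ :=
    proj_col R W _ _ hW1 hRS hIm2
  have hinj := mulVec_injective_of_rank _ hrank
  have hfull : N₁ * (W * crossCov X Z₁) = 1 := by
    apply mul_left_cancel_of_inj (crossCov X Z₁) _ _ hinj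
    rw [Matrix.mul_one]
    calc crossCov X Z₁ * (N₁ * (W * crossCov X Z₁))
        = R * W * crossCov X Z₁ * (N₁ * (W * crossCov X Z₁)) := by rw [hP1]
    _ = R * ((W * crossCov X Z₁) * (N₁ * (W * crossCov X Z₁))) := by
        rw [Matrix.mul_assoc R W (crossCov X Z₁),
          Matrix.mul_assoc R (W * crossCov X Z₁) (N₁ * (W * crossCov X Z₁))]
    _ = R * ((W * crossCov X Z₁) * N₁ * (W * crossCov X Z₁)) := by
        rw [Matrix.mul_assoc (W * crossCov X Z₁) N₁ (W * crossCov X Z₁)]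
    _ = R * (W * crossCov X Z₁) := by rw [hN1]
    _ = crossCov X Z₁ := by rw [← Matrix.mul_assoc, hP1]
  have hAS : Ahat * crossCov X Z₁ = crossCov X Z₂ := by
    rw [hAhat, Matrix.add_mul, Matrix.one_mul,
      mhat_mul R W _ _ N₁ hP1 hP2 hfull]
    abel
  constructor
  · rw [crossCov_affine hXm hZ₁m hX2 hZ₁01 Ahat bhat]; exact hAS
  · intro A b hc
    have hA : A * crossCov X Z₁ = crossCov X Z₂ := by
      rw [← crossCov_affine hXm hZ₁m hX2 hZ₁01 A b]; exact hc
    have hM : (A - 1) * crossCov X Z₁ = crossCov X Z₂ - crossCov X Z₁ := by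
      rw [Matrix.sub_mul, Matrix.one_mul, hA]
    have key := mat_min R W (crossCov X Z₁) (crossCov X Z₂) N₁ hRT hWsym hW2 hW4
      hN2 hN3 hP1 hP2 hfull (A - 1) hM
    rw [objective_eq hXm hX2 A b, objective_eq hXm hX2 Ahat bhat]
    have hchat : (Ahat - 1).mulVec (vmean X) + bhat = 0 := by
      rw [hbhat, Matrix.sub_mulVec, Matrix.one_mulVec]
      abel
    rw [hchat]
    simp only [Pi.zero_apply, ne_eq, OfNat.ofNat_ne_zero, not_false_eq_true, zero_pow,
      Finset.sum_const_zero, add_zero]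
    have hA1 : Ahat - 1 = R * (W * crossCov X Z₂ - W * crossCov X Z₁) * N₁ * W := by
      rw [hAhat]; abel
    rw [hA1, ← hRS, trace_form _ R hRT, trace_form (A - 1) R hRT]
    calc Matrix.trace (((R * (W * crossCov X Z₂ - W * crossCov X Z₁) * N₁ * W) * R)
            * ((R * (W * crossCov X Z₂ - W * crossCov X Z₁) * N₁ * W) * R)ᵀ)
        ≤ Matrix.trace (((A - 1) * R) * ((A - 1) * R)ᵀ) := key
    _ ≤ _ := le_add_of_nonneg_right (Finset.sum_nonneg fun i _ => sq_nonneg _)
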